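/- For any nonnegative square matrix A and any integer n ≥ 1, and any indices i,j, we have (A^n)_{i,j}^2 + (A^n)_{j,i}^2 ≥ 2·(Ā^n)_{i,j}^2, where Ā(i,j) = sqrt(A(i,j)·A(j,i)). -/

import Mathlib

/-!
By induction on `k`, `(Āᵏ)ᵢⱼ ≤ √((Aᵏ)ᵢⱼ (Aᵏ)ⱼᵢ)`: expanding `Āᵏ⁺¹ = Ā Āᵏ`, each term
`√(Aᵢₗ Aₗᵢ) √((Aᵏ)ₗⱼ (Aᵏ)ⱼₗ)` regroups as `√(Aᵢₗ (Aᵏ)ₗⱼ) √((Aᵏ)ⱼₗ Aₗᵢ)`, and Cauchy–Schwarz bounds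
the sum by `√((A Aᵏ)ᵢⱼ) √((Aᵏ A)ⱼᵢ)`. Squaring and AM–GM give the theorem.
-/

open Matrix Finset

noncomputable def geomMeanSymm {ι : Type*} (A : Matrix ι ι ℝ) : Matrix ι ι ℝ :=
  of fun a b => √(A a b * A b a)

section

variable {ι : Type*} [Fintype ι] [DecidableEq ι] {A : Matrix ι ι ℝ}

theorem geomMeanSymm_pow_apply_le_sqrt (hA : ∀ i j, 0 ≤ A i j) (k : ℕ) (i j : ι) :
    (geomMeanSymm A ^ k) i j ≤ √((A ^ k) i j * (A ^ k) j i) := by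
  induction k generalizing i with
  | zero =>
    by_cases h : i = j
    · simp [h]
    · simp [one_apply_ne h]
  | succ k ih =>
    have hAk := pow_apply_nonneg hA k
    calc (geomMeanSymm A ^ (k + 1)) i j
        = ∑ l, geomMeanSymm A i l * (geomMeanSymm A ^ k) l j := by rw [pow_succ', mul_apply]
      _ ≤ ∑ l, √(A i l * A l i) * √((A ^ k) l j * (A ^ k) j l) :=
          sum_le_sum fun l _ => mul_le_mul_of_nonneg_left (ih l) (Real.sqrt_nonneg _)
      _ = ∑ l, √(A i l * (A ^ k) l j) * √((A ^ k) j l * A l i) := by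
          refine sum_congr rfl fun l _ => ?_
          rw [← Real.sqrt_mul' _ (mul_nonneg (hAk _ _) (hAk _ _)),
            ← Real.sqrt_mul' _ (mul_nonneg (hAk _ _) (hA _ _))]
          ring_nf
      _ ≤ √(∑ l, A i l * (A ^ k) l j) * √(∑ l, (A ^ k) j l * A l i) :=
          Real.sum_sqrt_mul_sqrt_le _ (fun l => mul_nonneg (hA _ _) (hAk _ _))
            (fun l => mul_nonneg (hAk _ _) (hA _ _))
      _ = √((A ^ (k + 1)) i j * (A ^ (k + 1)) j i) := by
          rw [← Real.sqrt_mul (sum_nonneg fun l _ => mul_nonneg (hA _ _) (hAk _ _)),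
            ← mul_apply, ← mul_apply, ← pow_succ', ← pow_succ]

theorem sq_geomMeanSymm_pow_apply_le_mul (hA : ∀ i j, 0 ≤ A i j) (k : ℕ) (i j : ι) :
    (geomMeanSymm A ^ k) i j ^ 2 ≤ (A ^ k) i j * (A ^ k) j i := by
  have hAk := pow_apply_nonneg hA k
  have hBk := pow_apply_nonneg (A := geomMeanSymm A) (fun _ _ => Real.sqrt_nonneg _) k
  exact (Real.le_sqrt (hBk i j) (mul_nonneg (hAk i j) (hAk j i))).1
    (geomMeanSymm_pow_apply_le_sqrt hA k i j)

end

theorem stmt2_general {n : ℕ} (A : Matrix (Fin n) (Fin n) ℝ) (hA : ∀ i j, 0 ≤ A i j)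
    (k : ℕ) (i j : Fin n) :
    2 * (((Matrix.of fun a b => Real.sqrt (A a b * A b a)) ^ k) i j) ^ 2 ≤
      ((A ^ k) i j) ^ 2 + ((A ^ k) j i) ^ 2 :=
  calc 2 * (geomMeanSymm A ^ k) i j ^ 2
      ≤ 2 * ((A ^ k) i j * (A ^ k) j i) := by
        gcongr; exact sq_geomMeanSymm_pow_apply_le_mul hA k i j
    _ ≤ (A ^ k) i j ^ 2 + (A ^ k) j i ^ 2 := by rw [← mul_assoc]; exact two_mul_le_add_sq _ _

theorem stmt2 {n : ℕ} (A : Matrix (Fin n) (Fin n) ℝ) (hA : ∀ i j, 0 ≤ A i j)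
    (k : ℕ) (hk : 1 ≤ k) (i j : Fin n) :
    2 * (((Matrix.of fun a b => Real.sqrt (A a b * A b a)) ^ k) i j) ^ 2 ≤
      ((A ^ k) i j) ^ 2 + ((A ^ k) j i) ^ 2 :=
  stmt2_general A hA k i j
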